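/- arXiv:1909.03445 — 2 statements merged into one kernel-verified Lean document; each statement's English description precedes it below -/
import Mathlib

section
/- Let u, v be distinct vertices and suppose an edge update occurs between them. Let π, σ be permutations with π(u) < π(v), σ(u) < σ(v), and let S = S_v^π ≠ ∅ be the influenced set. If π and σ induce the same relative order on S and the same relative order on V∖S, then the greedy MIS with respect to π equals the greedy MIS with respect to σ (on the graph before the update), and S_v^σ = S. -/
set_option linter.unusedSectionVars false
set_option linter.unusedVariables false
set_option linter.unreachableTactic false
set_option linter.unusedTactic false
set_option maxHeartbeats 800000


variable {V : Type*} [Fintype V] [DecidableEq V]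

/-- The greedy MIS of `G` with respect to the order given by the rank function
`π : V → ℕ`: a vertex is selected iff no `π`-earlier neighbor is selected. -/
def greedyMIS (G : SimpleGraph V) (π : V → ℕ) : V → Prop :=
  fun v => ∀ w, G.Adj w v → π w < π v → ¬ greedyMIS G π w
termination_by v => π v
decreasing_by assumption

/-- `I_w^π`: the set of neighbors of `w` in `G` preceding `w` in the order `π`. -/
def predSet (G : SimpleGraph V) (π : V → ℕ) (w : V) : Set V :=
  {x | G.Adj x w ∧ π x < π w}

/-- The iterative construction: `S₀ = {v}`,
`S_{i+1} = {w ∈ M : S_i ∩ I_w ≠ ∅} ∪ {w ∉ M : I_w ∩ M ⊆ ⋃_{j ≤ i} S_j}`. -/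
def Sseq (M : Set V) (I : V → Set V) (v : V) : ℕ → Set V
  | 0 => {v}
  | (i + 1) =>
      {w | w ∈ M ∧ (Sseq M I v i ∩ I w).Nonempty} ∪
        {w | w ∉ M ∧ I w ∩ M ⊆ ⋃ j ≤ i, Sseq M I v j}

/-- `v` violates its greedy-MIS constraint after the update from `G` to `G'`:
either `v` is in the (old) greedy MIS and has an earlier MIS neighbor in `G'`,
or `v` is not in the greedy MIS and has no earlier MIS neighbor in `G'`. -/
def violated (G G' : SimpleGraph V) (π : V → ℕ) (v : V) : Prop :=
  (greedyMIS G π v ∧ ∃ w ∈ predSet G' π v, greedyMIS G π w) ∨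
    (¬ greedyMIS G π v ∧ ∀ w ∈ predSet G' π v, ¬ greedyMIS G π w)

/-- The influenced set `S_v^π` of the edge update from `G` to `G'`: empty if
`v` does not violate its greedy constraint after the update, and otherwise the
union `⋃ i, S_i` of the iterative construction (with `M` the greedy MIS of the
old graph `G` and predecessor neighborhoods taken in the updated graph `G'`). -/
def influencedSet (G G' : SimpleGraph V) (π : V → ℕ) (v : V) : Set V :=
  {x | violated G G' π v ∧
    x ∈ ⋃ i, Sseq {y | greedyMIS G π y} (predSet G' π) v i}

lemma greedy_unfold (G : SimpleGraph V) (π : V → ℕ) (v : V) :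
    greedyMIS G π v ↔ ∀ w, G.Adj w v → π w < π v → ¬ greedyMIS G π w := by
  rw [greedyMIS]

lemma not_greedy (G : SimpleGraph V) (π : V → ℕ) (v : V) :
    ¬ greedyMIS G π v ↔ ∃ w, G.Adj w v ∧ π w < π v ∧ greedyMIS G π w := by
  rw [greedy_unfold]; push_neg; rfl

lemma mem_Sseq_zero (M : Set V) (I : V → Set V) (v x : V) :
    x ∈ Sseq M I v 0 ↔ x = v := by rw [Sseq]; rfl

lemma mem_Sseq_succ (M : Set V) (I : V → Set V) (v x : V) (i : ℕ) :
    x ∈ Sseq M I v (i + 1) ↔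
      (x ∈ M ∧ (Sseq M I v i ∩ I x).Nonempty) ∨
        (x ∉ M ∧ I x ∩ M ⊆ ⋃ j ≤ i, Sseq M I v j) := by
  rw [Sseq]; rfl

def Closed (M : Set V) (I : V → Set V) (X : Set V) : Prop :=
  (∀ w ∈ M, (I w ∩ X).Nonempty → w ∈ X) ∧
    (∀ w, w ∉ M → I w ∩ M ⊆ X → w ∈ X)

def Tset (M : Set V) (I : V → Set V) (v : V) : Set V := ⋃ i, Sseq M I v i

lemma Sseq_subset_T (M : Set V) (I : V → Set V) (v : V) (i : ℕ) :
    Sseq M I v i ⊆ Tset M I v := Set.subset_iUnion (Sseq M I v) i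

lemma v_mem_T (M : Set V) (I : V → Set V) (v : V) : v ∈ Tset M I v :=
  Sseq_subset_T M I v 0 ((mem_Sseq_zero M I v v).2 rfl)

lemma T_closed (M : Set V) (I : V → Set V) (v : V) :
    Closed M I (Tset M I v) := by
  constructor
  · rintro w hw ⟨z, hz1, hz2⟩
    obtain ⟨_, ⟨i, rfl⟩, hz2⟩ := hz2
    exact Sseq_subset_T M I v (i + 1)
      ((mem_Sseq_succ M I v w i).2 (Or.inl ⟨hw, z, hz2, hz1⟩))
  · intro w hw hsub
    obtain ⟨N, hN⟩ : ∃ N, I w ∩ M ⊆ ⋃ j ≤ N, Sseq M I v j := by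
      classical
      have hidx : ∀ z : V, ∃ i, z ∈ I w ∩ M → z ∈ Sseq M I v i := by
        intro z
        by_cases hz : z ∈ I w ∩ M
        · obtain ⟨_, ⟨i, rfl⟩, hi⟩ := hsub hz; exact ⟨i, fun _ => hi⟩
        · exact ⟨0, fun h => absurd h hz⟩
      choose f hf using hidx
      refine ⟨Finset.univ.sup f, ?_⟩
      intro z hz
      exact Set.mem_iUnion₂.2 ⟨f z, Finset.le_sup (Finset.mem_univ z), hf z hz⟩
    exact Sseq_subset_T M I v (N + 1)
      ((mem_Sseq_succ M I v w N).2 (Or.inr ⟨hw, hN⟩))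

lemma T_least (M : Set V) (I : V → Set V) (v : V) (X : Set V)
    (hv : v ∈ X) (hX : Closed M I X) : Tset M I v ⊆ X := by
  have key : ∀ i, Sseq M I v i ⊆ X := by
    intro i
    induction i using Nat.strong_induction_on with
    | _ i ih =>
      match i with
      | 0 => intro z hz; rw [(mem_Sseq_zero M I v z).1 hz]; exact hv
      | (i+1) =>
        intro z hz
        rcases (mem_Sseq_succ M I v z i).1 hz with ⟨hzM, w, hw1, hw2⟩ | ⟨hzM, hsub⟩
        · exact hX.1 z hzM ⟨w, hw2, ih i (Nat.lt_succ_self i) hw1⟩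
        · refine hX.2 z hzM (hsub.trans ?_)
          rintro y hy
          obtain ⟨j, hj, hy⟩ := Set.mem_iUnion₂.1 hy
          exact ih j (Nat.lt_succ_of_le hj) hy
  rintro z ⟨_, ⟨i, rfl⟩, hz⟩
  exact key i hz

lemma T_elim_notmem (M : Set V) (I : V → Set V) (v : V) (x : V)
    (hx : x ∈ Tset M I v) (hxM : x ∉ M) : x = v ∨ I x ∩ M ⊆ Tset M I v := by
  obtain ⟨_, ⟨i, rfl⟩, hx⟩ := hx
  match i with
  | 0 => exact Or.inl ((mem_Sseq_zero M I v x).1 hx)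
  | (i+1) =>
    rcases (mem_Sseq_succ M I v x i).1 hx with ⟨hxM', _⟩ | ⟨_, hsub⟩
    · exact absurd hxM' hxM
    · refine Or.inr (hsub.trans ?_)
      rintro y hy
      obtain ⟨j, hj, hy⟩ := Set.mem_iUnion₂.1 hy
      exact Sseq_subset_T M I v j hy

noncomputable section
open Classical

def swapFn (π : V → ℕ) (a b : V) : V → ℕ :=
  fun w => if w = a then π b else if w = b then π a else π w

lemma swapFn_a (π : V → ℕ) (a b : V) : swapFn π a b a = π b := by simp [swapFn]

lemma swapFn_b (π : V → ℕ) (a b : V) (hba : b ≠ a) : swapFn π a b b = π a := by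
  simp [swapFn, hba]

lemma swapFn_other (π : V → ℕ) (a b c : V) (h1 : c ≠ a) (h2 : c ≠ b) :
    swapFn π a b c = π c := by simp [swapFn, h1, h2]

section Swap

variable (π : V → ℕ) (hπ : Function.Injective π) (a b : V) (hab : π a < π b)
  (hcons : ∀ c, π c ≤ π a ∨ π b ≤ π c)

include hπ hab hcons

lemma key_ab (z : V) (h1 : z ≠ a) (h2 : z ≠ b) : (π z < π a ↔ π z < π b) := by
  have k1 : π z ≠ π a := fun h => h1 (hπ h)
  have k2 : π z ≠ π b := fun h => h2 (hπ h)
  have := hcons z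
  omega

lemma swap_lt_iff (c d : V) (h1 : ¬(c = a ∧ d = b)) (h2 : ¬(c = b ∧ d = a)) :
    (swapFn π a b c < swapFn π a b d ↔ π c < π d) := by
  have hba : b ≠ a := fun h => absurd hab (by rw [h]; exact lt_irrefl _)
  by_cases hca : c = a
  · subst hca
    by_cases hdc : d = c
    · subst hdc; simp
    · by_cases hdb : d = b
      · exact absurd ⟨rfl, hdb⟩ h1
      · rw [swapFn_a, swapFn_other π c b d hdc hdb]
        have k1 : π d ≠ π c := fun h => hdc (hπ h)
        have k2 : π d ≠ π b := fun h => hdb (hπ h)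
        have := hcons d
        omega
  · by_cases hcb : c = b
    · subst hcb
      by_cases hda : d = a
      · exact absurd ⟨rfl, hda⟩ h2
      · by_cases hdc : d = c
        · subst hdc; simp
        · rw [swapFn_b π a c hba, swapFn_other π a c d hda hdc]
          have k1 : π d ≠ π a := fun h => hda (hπ h)
          have k2 : π d ≠ π c := fun h => hdc (hπ h)
          have := hcons d
          omega
    · rw [swapFn_other π a b c hca hcb]
      by_cases hda : d = a
      · subst hda
        rw [swapFn_a]
        exact (key_ab π hπ d b hab hcons c hca hcb).symm
      · by_cases hdb : d = b
        · subst hdb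
          rw [swapFn_b π a d hba]
          have k1 : π c ≠ π a := fun h => hca (hπ h)
          have k2 : π c ≠ π d := fun h => hcb (hπ h)
          have := hcons c
          omega
        · rw [swapFn_other π a b d hda hdb]

lemma swapFn_inj : Function.Injective (swapFn π a b) := by
  have hba : b ≠ a := fun h => absurd hab (by rw [h]; exact lt_irrefl _)
  intro c d h
  by_cases hca : c = a <;> by_cases hcb : c = b <;>
    by_cases hda : d = a <;> by_cases hdb : d = b <;>
    simp_all [swapFn] <;>
    first
      | rfl
      | (exact hπ h)
      | (exact absurd (hπ h) (by omega))
      | (exact absurd (hπ h).symm (by assumption))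
      | (exact absurd (hπ h) (by assumption))
      | omega

end Swap

lemma greedy_ext (G : SimpleGraph V) (π σ : V → ℕ)
    (h : ∀ a b, π a < π b ↔ σ a < σ b) (w : V) :
    greedyMIS G π w ↔ greedyMIS G σ w := by
  have main : ∀ n w, π w = n → (greedyMIS G π w ↔ greedyMIS G σ w) := by
    intro n
    induction n using Nat.strong_induction_on with
    | _ n ih =>
      intro w hw
      rw [greedy_unfold G π w, greedy_unfold G σ w]
      constructor
      · intro H z hz hlt
        have hπz : π z < π w := (h z w).2 hlt
        exact fun hg => H z hz hπz ((ih (π z) (hw ▸ hπz) z rfl).2 hg)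
      · intro H z hz hlt
        exact fun hg => H z hz ((h z w).1 hlt) ((ih (π z) (hw ▸ hlt) z rfl).1 hg)
  exact main (π w) w rfl

section SwapMIS

variable (G : SimpleGraph V) (π : V → ℕ) (hπ : Function.Injective π) (a b : V)
  (hab : π a < π b) (hcons : ∀ c, π c ≤ π a ∨ π b ≤ π c)

include hπ hab hcons

lemma swapMIS
    (hadj : G.Adj a b →
      (¬ greedyMIS G π b ∧
        (greedyMIS G π a → ∃ z, G.Adj z b ∧ π z < π b ∧ greedyMIS G π z ∧ z ≠ a))
      ∨ (greedyMIS G π b ∧ ¬ greedyMIS G π a)) :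
    ∀ w, greedyMIS G (swapFn π a b) w ↔ greedyMIS G π w := by
  have hba : b ≠ a := fun h => absurd hab (by rw [h]; exact lt_irrefl _)
  set π' := swapFn π a b with hπ'
  have hπ'a : π' a = π b := swapFn_a π a b
  have hπ'b : π' b = π a := swapFn_b π a b hba
  have hπ'o : ∀ z, z ≠ a → z ≠ b → π' z = π z := fun z h1 h2 => swapFn_other π a b z h1 h2
  have key : ∀ z, z ≠ a → z ≠ b → (π z < π a ↔ π z < π b) :=
    fun z h1 h2 => key_ab π hπ a b hab hcons z h1 h2
  have main : ∀ n w, π' w = n → (greedyMIS G π' w ↔ greedyMIS G π w) := by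
    intro n
    induction n using Nat.strong_induction_on with
    | _ n ih =>
      intro w hw
      by_cases hwa : w = a
      · subst hwa
        -- n = π' w = π b
        by_cases hc2 : G.Adj w b ∧ greedyMIS G π b ∧ ¬ greedyMIS G π w
        · -- both sides false
          refine iff_of_false (fun H => ?_) hc2.2.2
          rw [greedy_unfold] at H
          have hb' : ¬ greedyMIS G π' b :=
            H b hc2.1.symm (by rw [hπ'b, hπ'a]; exact hab)
          have : π' b < n := by rw [hπ'b, ← hw, hπ'a]; exact hab
          exact hb' ((ih (π' b) this b rfl).2 hc2.2.1)
        · -- the MIS status of w = a is unchanged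
          have hbn : G.Adj w b → ¬ greedyMIS G π b := by
            intro hA
            rcases hadj hA with ⟨h1, _⟩ | ⟨h1, h2⟩
            · exact h1
            · exact absurd ⟨hA, h1, h2⟩ hc2
          rw [greedy_unfold G π' w, greedy_unfold G π w]
          constructor
          · intro H z hz hlt
            have hza : z ≠ w := fun h => (h ▸ hz).ne rfl
            by_cases hzb : z = b
            · subst hzb; exact absurd hlt (lt_asymm hab)
            · intro hg
              have hlt' : π' z < π' w := by
                rw [hπ'o z hza hzb, hπ'a]; exact (key z hza hzb).1 hlt
              have hm : π' z < n := hw ▸ hlt'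
              exact H z hz hlt' ((ih (π' z) hm z rfl).2 hg)
          · intro H z hz hlt'
            have hza : z ≠ w := fun h => (h ▸ hz).ne rfl
            by_cases hzb : z = b
            · subst hzb
              intro hg
              have hm : π' z < n := hw ▸ hlt'
              exact hbn hz.symm ((ih (π' z) hm z rfl).1 hg)
            · have hlt : π z < π w := by
                rw [hπ'o z hza hzb, hπ'a] at hlt'; exact (key z hza hzb).2 hlt'
              intro hg
              have hm : π' z < n := hw ▸ hlt'
              exact H z hz hlt ((ih (π' z) hm z rfl).1 hg)
      · by_cases hwb : w = b
        · subst hwb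
          -- n = π' w = π a
          by_cases hA : G.Adj a w
          · rcases hadj hA with ⟨hnb, hex⟩ | ⟨hgb, hga⟩
            · -- both sides false
              refine iff_of_false (fun H => ?_) hnb
              rw [greedy_unfold] at H
              obtain ⟨z, hz, hlt, hgz⟩ := (not_greedy G π w).1 hnb
              obtain ⟨z, hz, hlt, hgz, hzna⟩ :
                  ∃ z, G.Adj z w ∧ π z < π w ∧ greedyMIS G π z ∧ z ≠ a := by
                by_cases hza : z = a
                · exact hex (hza ▸ hgz)
                · exact ⟨z, hz, hlt, hgz, hza⟩
              have hzb : z ≠ w := fun h => (h ▸ hz).ne rfl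
              have hlt' : π' z < π' w := by
                rw [hπ'o z hzna hzb, hπ'b]
                exact (key z hzna hzb).2 hlt
              have hm : π' z < n := hw ▸ hlt'
              exact H z hz hlt' ((ih (π' z) hm z rfl).2 hgz)
            · -- both sides true
              refine iff_of_true ?_ hgb
              rw [greedy_unfold]
              intro z hz hlt'
              have hzw : z ≠ w := fun h => (h ▸ hz).ne rfl
              by_cases hza : z = a
              · subst hza
                rw [hπ'a, hπ'b] at hlt'
                exact absurd hlt' (lt_asymm hab)
              · have hlt : π z < π w := by
                  rw [hπ'o z hza hzw, hπ'b] at hlt'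
                  exact (key z hza hzw).1 hlt'
                have hm : π' z < n := hw ▸ hlt'
                intro hg
                exact (greedy_unfold G π w).1 hgb z hz hlt ((ih (π' z) hm z rfl).1 hg)
          · -- a, b not adjacent: direct transport
            rw [greedy_unfold G π' w, greedy_unfold G π w]
            constructor
            · intro H z hz hlt
              have hzw : z ≠ w := fun h => (h ▸ hz).ne rfl
              have hza : z ≠ a := fun h => hA (h ▸ hz)
              have hlt' : π' z < π' w := by
                rw [hπ'o z hza hzw, hπ'b]
                exact (key z hza hzw).2 hlt
              have hm : π' z < n := hw ▸ hlt'
              exact fun hg => H z hz hlt' ((ih (π' z) hm z rfl).2 hg)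
            · intro H z hz hlt'
              have hzw : z ≠ w := fun h => (h ▸ hz).ne rfl
              have hza : z ≠ a := fun h => hA (h ▸ hz)
              have hlt : π z < π w := by
                rw [hπ'o z hza hzw, hπ'b] at hlt'
                exact (key z hza hzw).1 hlt'
              have hm : π' z < n := hw ▸ hlt'
              exact fun hg => H z hz hlt ((ih (π' z) hm z rfl).1 hg)
        · -- w ∉ {a, b}
          rw [greedy_unfold G π' w, greedy_unfold G π w]
          constructor
          · intro H z hz hlt
            have h1 : ¬(z = a ∧ w = b) := fun h => hwb h.2
            have h2 : ¬(z = b ∧ w = a) := fun h => hwa h.2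
            have hlt' : π' z < π' w := (swap_lt_iff π hπ a b hab hcons z w h1 h2).2 hlt
            have hm : π' z < n := hw ▸ hlt'
            exact fun hg => H z hz hlt' ((ih (π' z) hm z rfl).2 hg)
          · intro H z hz hlt'
            have h1 : ¬(z = a ∧ w = b) := fun h => hwb h.2
            have h2 : ¬(z = b ∧ w = a) := fun h => hwa h.2
            have hlt : π z < π w := (swap_lt_iff π hπ a b hab hcons z w h1 h2).1 hlt'
            have hm : π' z < n := hw ▸ hlt'
            exact fun hg => H z hz hlt ((ih (π' z) hm z rfl).1 hg)
  exact fun w => main (π' w) w rfl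

end SwapMIS

section SwapPred

variable (π : V → ℕ) (hπ : Function.Injective π) (a b : V) (hab : π a < π b)
  (hcons : ∀ c, π c ≤ π a ∨ π b ≤ π c)

include hπ hab hcons

lemma predSet_swap_other (H : SimpleGraph V) (w : V) (hw1 : w ≠ a) (hw2 : w ≠ b) :
    predSet H (swapFn π a b) w = predSet H π w := by
  ext z
  simp only [predSet, Set.mem_setOf_eq]
  constructor <;> rintro ⟨h1, h2⟩ <;> refine ⟨h1, ?_⟩
  · exact (swap_lt_iff π hπ a b hab hcons z w (fun h => hw2 h.2) (fun h => hw1 h.2)).1 h2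
  · exact (swap_lt_iff π hπ a b hab hcons z w (fun h => hw2 h.2) (fun h => hw1 h.2)).2 h2

lemma predSet_swap_a (H : SimpleGraph V) :
    predSet H (swapFn π a b) a = predSet H π a ∪ {z | z = b ∧ H.Adj b a} := by
  have hba : b ≠ a := fun h => absurd hab (by rw [h]; exact lt_irrefl _)
  ext z
  simp only [predSet, Set.mem_setOf_eq, Set.mem_union]
  by_cases hzb : z = b
  · rw [hzb, swapFn_a, swapFn_b π a b hba]
    constructor
    · rintro ⟨h1, _⟩; exact Or.inr ⟨rfl, h1⟩
    · rintro (⟨h1, h2⟩ | ⟨_, h1⟩)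
      · exact absurd h2 (lt_asymm hab)
      · exact ⟨h1, hab⟩
  · by_cases hza : z = a
    · rw [hza]
      constructor
      · rintro ⟨h1, _⟩; exact absurd rfl h1.ne
      · rintro (⟨h1, _⟩ | ⟨h1, _⟩)
        · exact absurd rfl h1.ne
        · exact absurd (hza ▸ h1 : z = b) hzb
    · rw [swapFn_other π a b z hza hzb, swapFn_a]
      constructor
      · rintro ⟨h1, h2⟩
        exact Or.inl ⟨h1, (key_ab π hπ a b hab hcons z hza hzb).2 h2⟩
      · rintro (⟨h1, h2⟩ | ⟨h1, _⟩)
        · exact ⟨h1, (key_ab π hπ a b hab hcons z hza hzb).1 h2⟩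
        · exact absurd h1 hzb

lemma predSet_swap_b (H : SimpleGraph V) :
    predSet H (swapFn π a b) b = predSet H π b \ {a} := by
  have hba : b ≠ a := fun h => absurd hab (by rw [h]; exact lt_irrefl _)
  ext z
  simp only [predSet, Set.mem_setOf_eq, Set.mem_diff, Set.mem_singleton_iff]
  by_cases hza : z = a
  · rw [hza, swapFn_a, swapFn_b π a b hba]
    constructor
    · rintro ⟨_, h2⟩; exact absurd h2 (lt_asymm hab)
    · rintro ⟨_, h2⟩; exact absurd rfl h2
  · by_cases hzb : z = b
    · rw [hzb]
      constructor
      · rintro ⟨h1, _⟩; exact absurd rfl h1.ne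
      · rintro ⟨⟨h1, _⟩, _⟩; exact absurd rfl h1.ne
    · rw [swapFn_other π a b z hza hzb, swapFn_b π a b hba]
      constructor
      · rintro ⟨h1, h2⟩
        exact ⟨⟨h1, (key_ab π hπ a b hab hcons z hza hzb).1 h2⟩, hza⟩
      · rintro ⟨⟨h1, h2⟩, _⟩
        exact ⟨h1, (key_ab π hπ a b hab hcons z hza hzb).2 h2⟩

end SwapPred

section Update

variable (G G' : SimpleGraph V) (u v : V)
  (hupd : G' = G ⊔ SimpleGraph.fromEdgeSet {s(u, v)} ∨
    G' = G \ SimpleGraph.fromEdgeSet {s(u, v)})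

include hupd

lemma adj_upd (p q : V) (h1 : ¬(p = u ∧ q = v)) (h2 : ¬(p = v ∧ q = u)) :
    (G'.Adj p q ↔ G.Adj p q) := by
  have hne : s(p, q) ≠ s(u, v) := by
    intro h
    rw [Sym2.eq_iff] at h
    rcases h with ⟨h3, h4⟩ | ⟨h3, h4⟩
    · exact h1 ⟨h3, h4⟩
    · exact h2 ⟨h3, h4⟩
  rcases hupd with rfl | rfl
  · simp [SimpleGraph.fromEdgeSet_adj, hne]
  · simp [SimpleGraph.fromEdgeSet_adj, hne]

lemma pred_upd (ρ : V → ℕ) (hρuv : ρ u < ρ v) (w : V) (hw : w ≠ v) :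
    predSet G' ρ w = predSet G ρ w := by
  ext z
  simp only [predSet, Set.mem_setOf_eq]
  by_cases h1 : z = v ∧ w = u
  · obtain ⟨rfl, rfl⟩ := h1
    constructor <;> rintro ⟨h, hlt⟩ <;> exact absurd hlt (by omega)
  · rw [adj_upd G G' u v hupd z w (fun h => hw h.2) h1]

lemma F2 (π : V → ℕ) (hπ : Function.Injective π) (hπuv : π u < π v)
    (hvio : violated G G' π v) (x y : V)
    (hx : x ∈ Tset {y | greedyMIS G π y} (predSet G' π) v)
    (hy : y ∉ Tset {y | greedyMIS G π y} (predSet G' π) v)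
    (hxyvu : ¬(x = v ∧ y = u)) (hA : G.Adj x y) : ¬ greedyMIS G π y := by
  set M : Set V := {y | greedyMIS G π y} with hM
  set I : V → Set V := predSet G' π with hI
  intro hgy
  have hyv : y ≠ v := fun h => hy (h ▸ v_mem_T M I v)
  have hA' : G'.Adj x y := (adj_upd G G' u v hupd x y (fun h => hyv h.2) hxyvu).2 hA
  rcases lt_trichotomy (π x) (π y) with hlt | heq | hlt
  · exact hy ((T_closed M I v).1 y hgy ⟨x, ⟨hA', hlt⟩, hx⟩)
  · exact hA.ne (hπ heq)
  · by_cases hgx : greedyMIS G π x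
    · exact (greedy_unfold G π x).1 hgx y hA.symm hlt hgy
    · rcases T_elim_notmem M I v x hx hgx with rfl | hsub
      · rcases hvio with ⟨hgv, _⟩ | ⟨_, hall⟩
        · exact hgx hgv
        · exact hall y ⟨hA'.symm, hlt⟩ hgy
      · exact hy (hsub ⟨⟨hA'.symm, hlt⟩, hgy⟩)

lemma F3 (π : V → ℕ) (hπ : Function.Injective π) (hπuv : π u < π v)
    (hvio : violated G G' π v) (x y : V)
    (hx : x ∈ Tset {y | greedyMIS G π y} (predSet G' π) v)
    (hy : y ∉ Tset {y | greedyMIS G π y} (predSet G' π) v)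
    (hxyvu : ¬(x = v ∧ y = u)) (hA : G.Adj x y) (hlt : π x < π y)
    (hgx : greedyMIS G π x) :
    ∃ z, G.Adj z y ∧ π z < π y ∧ greedyMIS G π z ∧ z ≠ x := by
  set M : Set V := {y | greedyMIS G π y} with hM
  set I : V → Set V := predSet G' π with hI
  have hyv : y ≠ v := fun h => hy (h ▸ v_mem_T M I v)
  have hgy : ¬ greedyMIS G π y :=
    F2 G G' u v hupd π hπ hπuv hvio x y hx hy hxyvu hA
  by_contra hcon
  push_neg at hcon
  apply hy
  refine (T_closed M I v).2 y hgy ?_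
  rintro z ⟨hz1, hz2⟩
  have hz1' : z ∈ predSet G π y := by
    rw [hI, pred_upd G G' u v hupd π hπuv y hyv] at hz1
    exact hz1
  obtain ⟨hz3, hz4⟩ := hz1'
  rw [hcon z hz3 hz4 hz2]
  exact hx

end Update

section Main

variable (G G' : SimpleGraph V) (u v : V)
  (hupd : G' = G ⊔ SimpleGraph.fromEdgeSet {s(u, v)} ∨
    G' = G \ SimpleGraph.fromEdgeSet {s(u, v)})

include hupd

lemma main_step (π : V → ℕ) (hπ : Function.Injective π) (hπuv : π u < π v)
    (hvio : violated G G' π v)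
    (a b : V) (hab : π a < π b) (hcons : ∀ c, π c ≤ π a ∨ π b ≤ π c)
    (habuv : ¬(a = u ∧ b = v))
    (hxor : (a ∈ Tset {y | greedyMIS G π y} (predSet G' π) v ∧
        b ∉ Tset {y | greedyMIS G π y} (predSet G' π) v) ∨
      (a ∉ Tset {y | greedyMIS G π y} (predSet G' π) v ∧
        b ∈ Tset {y | greedyMIS G π y} (predSet G' π) v)) :
    (∀ w, greedyMIS G (swapFn π a b) w ↔ greedyMIS G π w) ∧
      influencedSet G G' (swapFn π a b) v = influencedSet G G' π v ∧
      swapFn π a b u < swapFn π a b v := by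
  classical
  set M : Set V := {y | greedyMIS G π y} with hMdef
  set I : V → Set V := predSet G' π with hIdef
  set T : Set V := Tset M I v with hTdef
  set π' : V → ℕ := swapFn π a b with hπ'def
  have hba : b ≠ a := fun h => absurd hab (by rw [h]; exact lt_irrefl _)
  have havb : ¬(a = v ∧ b = u) := by
    rintro ⟨rfl, rfl⟩; exact absurd hab (by omega)
  have hbavu : ¬(b = v ∧ a = u) := fun h => habuv ⟨h.2, h.1⟩
  -- greedy MIS is unchanged by the swap
  have hadjcond : G.Adj a b →
      (¬ greedyMIS G π b ∧
        (greedyMIS G π a → ∃ z, G.Adj z b ∧ π z < π b ∧ greedyMIS G π z ∧ z ≠ a))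
      ∨ (greedyMIS G π b ∧ ¬ greedyMIS G π a) := by
    intro hA
    rcases hxor with ⟨haT, hbT⟩ | ⟨haT, hbT⟩
    · exact Or.inl ⟨F2 G G' u v hupd π hπ hπuv hvio a b haT hbT havb hA,
        fun hga => F3 G G' u v hupd π hπ hπuv hvio a b haT hbT havb hA hab hga⟩
    · by_cases hgb : greedyMIS G π b
      · exact Or.inr ⟨hgb, F2 G G' u v hupd π hπ hπuv hvio b a hbT haT hbavu hA.symm⟩
      · exact Or.inl ⟨hgb, fun hga =>
          absurd hga (F2 G G' u v hupd π hπ hπuv hvio b a hbT haT hbavu hA.symm)⟩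
  have hgiff : ∀ w, greedyMIS G π' w ↔ greedyMIS G π w :=
    swapMIS G π hπ a b hab hcons hadjcond
  -- ordering of u, v is unchanged
  have huvab1 : ¬(u = a ∧ v = b) := fun h => habuv ⟨h.1.symm, h.2.symm⟩
  have huvab2 : ¬(u = b ∧ v = a) := by
    rintro ⟨rfl, rfl⟩; exact absurd hπuv (by omega)
  have hπ'uv : π' u < π' v := (swap_lt_iff π hπ a b hab hcons u v huvab1 huvab2).2 hπuv
  -- predecessor sets after the swap
  have hIo : ∀ w, w ≠ a → w ≠ b → predSet G' π' w = I w :=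
    fun w h1 h2 => predSet_swap_other π hπ a b hab hcons G' w h1 h2
  have hIa : predSet G' π' a = I a ∪ {z | z = b ∧ G'.Adj b a} :=
    predSet_swap_a π hπ a b hab hcons G'
  have hIb : predSet G' π' b = I b \ {a} :=
    predSet_swap_b π hπ a b hab hcons G'
  -- adjacency transfer for the pair
  have hadj_ab : G'.Adj a b ↔ G.Adj a b := adj_upd G G' u v hupd a b habuv havb
  have hadj_ba : G'.Adj b a ↔ G.Adj b a :=
    adj_upd G G' u v hupd b a (fun h => havb ⟨h.2, h.1⟩) hbavu
  have hvT : v ∈ T := v_mem_T M I v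
  -- the iterated union T is unchanged
  have hTswap : Tset M (predSet G' π') v = T := by
    apply Set.Subset.antisymm
    · -- T' ⊆ T
      refine T_least M (predSet G' π') v T hvT ⟨?_, ?_⟩
      · rintro w hwM ⟨z, hz1, hz2⟩
        by_cases hwa : w = a
        · subst hwa
          rw [hIa] at hz1
          rcases hz1 with hz1 | ⟨hzb, hAba⟩
          · exact (T_closed M I v).1 w hwM ⟨z, hz1, hz2⟩
          · rcases hxor with ⟨haT, _⟩ | ⟨haT, hbT⟩
            · exact haT
            · exact absurd hwM
                (F2 G G' u v hupd π hπ hπuv hvio b w hbT haT hbavu (hadj_ba.1 hAba))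
        · by_cases hwb : w = b
          · subst hwb
            rw [hIb] at hz1
            exact (T_closed M I v).1 w hwM ⟨z, hz1.1, hz2⟩
          · rw [hIo w hwa hwb] at hz1
            exact (T_closed M I v).1 w hwM ⟨z, hz1, hz2⟩
      · intro w hwM hsub
        by_cases hwa : w = a
        · subst hwa
          refine (T_closed M I v).2 w hwM ?_
          rintro z ⟨hz1, hz2⟩
          exact hsub ⟨by rw [hIa]; exact Or.inl hz1, hz2⟩
        · by_cases hwb : w = b
          · subst hwb
            refine (T_closed M I v).2 w hwM ?_
            rintro z ⟨hz1, hz2⟩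
            by_cases hza : z = a
            · subst hza
              rcases hxor with ⟨haT, _⟩ | ⟨haT, hbT⟩
              · exact haT
              · exact absurd hz2
                  (F2 G G' u v hupd π hπ hπuv hvio w z hbT haT hbavu
                    ((hadj_ab.1 hz1.1).symm))
            · exact hsub ⟨by rw [hIb]; exact ⟨hz1, hza⟩, hz2⟩
          · refine (T_closed M I v).2 w hwM ?_
            rintro z ⟨hz1, hz2⟩
            refine hsub ⟨?_, hz2⟩
            rw [hIo w hwa hwb]
            exact hz1
    · -- T ⊆ T'
      have key : ∀ i, Sseq M I v i ⊆ Tset M (predSet G' π') v := by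
        intro i
        induction i using Nat.strong_induction_on with
        | _ i ih =>
          match i with
          | 0 =>
            intro z hz
            rw [(mem_Sseq_zero M I v z).1 hz]
            exact v_mem_T M (predSet G' π') v
          | (i+1) =>
            intro w hw
            have hwT : w ∈ T := Sseq_subset_T M I v (i+1) hw
            rcases (mem_Sseq_succ M I v w i).1 hw with ⟨hwM, z, hz1, hz2⟩ | ⟨hwM, hsub⟩
            · have hzT' : z ∈ Tset M (predSet G' π') v := ih i (Nat.lt_succ_self i) hz1
              by_cases hwa : w = a
              · subst hwa
                refine (T_closed M (predSet G' π') v).1 w hwM ⟨z, ?_, hzT'⟩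
                rw [hIa]
                exact Or.inl hz2
              · by_cases hwb : w = b
                · subst hwb
                  rcases hxor with ⟨haT, hbT⟩ | ⟨haT, hbT⟩
                  · exact absurd hwT hbT
                  · have hza : z ≠ a := fun h => haT (h ▸ Sseq_subset_T M I v i hz1)
                    refine (T_closed M (predSet G' π') v).1 w hwM ⟨z, ?_, hzT'⟩
                    rw [hIb]
                    exact ⟨hz2, hza⟩
                · refine (T_closed M (predSet G' π') v).1 w hwM ⟨z, ?_, hzT'⟩
                  rw [hIo w hwa hwb]
                  exact hz2
            · have hUj : (⋃ j ≤ i, Sseq M I v j) ⊆ Tset M (predSet G' π') v := by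
                intro y hy
                obtain ⟨j, hj, hy⟩ := Set.mem_iUnion₂.1 hy
                exact ih j (Nat.lt_succ_of_le hj) hy
              by_cases hwa : w = a
              · subst hwa
                rcases hxor with ⟨haT, hbT⟩ | ⟨haT, _⟩
                · refine (T_closed M (predSet G' π') v).2 w hwM ?_
                  rintro z ⟨hz1, hz2⟩
                  rw [hIa] at hz1
                  rcases hz1 with hz1 | ⟨hzb, hAba⟩
                  · exact hUj (hsub ⟨hz1, hz2⟩)
                  · subst hzb
                    exact absurd hz2
                      (F2 G G' u v hupd π hπ hπuv hvio w z haT hbT havb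
                        (hadj_ab.1 hAba.symm))
                · exact absurd hwT haT
              · by_cases hwb : w = b
                · subst hwb
                  refine (T_closed M (predSet G' π') v).2 w hwM ?_
                  rintro z ⟨hz1, hz2⟩
                  rw [hIb] at hz1
                  exact hUj (hsub ⟨hz1.1, hz2⟩)
                · refine (T_closed M (predSet G' π') v).2 w hwM ?_
                  rintro z ⟨hz1, hz2⟩
                  rw [hIo w hwa hwb] at hz1
                  exact hUj (hsub ⟨hz1, hz2⟩)
      rintro z ⟨_, ⟨i, rfl⟩, hz⟩
      exact key i hz
  -- the MIS-part of v's predecessor set is unchanged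
  have hPM : predSet G' π' v ∩ M = I v ∩ M := by
    by_cases hva : v = a
    · subst hva
      rw [hIa]
      ext z
      simp only [Set.mem_inter_iff, Set.mem_union, Set.mem_setOf_eq]
      constructor
      · rintro ⟨hz1 | ⟨hzb, hAbv⟩, hz2⟩
        · exact ⟨hz1, hz2⟩
        · subst hzb
          rcases hxor with ⟨haT, hbT⟩ | ⟨haT, hbT⟩
          · exact absurd hz2
              (F2 G G' u v hupd π hπ hπuv hvio v z haT hbT havb
                (hadj_ab.1 hAbv.symm))
          · exact absurd hvT haT
      · rintro ⟨hz1, hz2⟩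
        exact ⟨Or.inl hz1, hz2⟩
    · by_cases hvb : v = b
      · subst hvb
        rw [hIb]
        ext z
        simp only [Set.mem_inter_iff, Set.mem_diff, Set.mem_singleton_iff]
        constructor
        · rintro ⟨⟨hz1, _⟩, hz2⟩
          exact ⟨hz1, hz2⟩
        · rintro ⟨hz1, hz2⟩
          refine ⟨⟨hz1, ?_⟩, hz2⟩
          intro hza
          subst hza
          rcases hxor with ⟨haT, hbT⟩ | ⟨haT, hbT⟩
          · exact hbT hvT
          · exact absurd hz2
              (F2 G G' u v hupd π hπ hπuv hvio v z hvT haT hbavu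
                (hadj_ba.1 hz1.1.symm))
      · rw [hIo v hva hvb]
  -- `violated` is unchanged
  have hvio' : violated G G' π' v ↔ violated G G' π v := by
    have hex : (∃ w ∈ predSet G' π' v, greedyMIS G π' w) ↔
        (∃ w ∈ I v, greedyMIS G π w) := by
      constructor
      · rintro ⟨w, h1, h2⟩
        have hmem : w ∈ I v ∩ M :=
          hPM ▸ (⟨h1, (hgiff w).1 h2⟩ : w ∈ predSet G' π' v ∩ M)
        exact ⟨w, hmem.1, hmem.2⟩
      · rintro ⟨w, h1, h2⟩
        have hmem : w ∈ predSet G' π' v ∩ M := hPM.symm ▸ (⟨h1, h2⟩ : w ∈ I v ∩ M)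
        exact ⟨w, hmem.1, (hgiff w).2 hmem.2⟩
    have hall : (∀ w ∈ predSet G' π' v, ¬ greedyMIS G π' w) ↔
        (∀ w ∈ I v, ¬ greedyMIS G π w) := by
      constructor
      · intro H w h1 h2
        have hmem : w ∈ predSet G' π' v ∩ M := hPM.symm ▸ (⟨h1, h2⟩ : w ∈ I v ∩ M)
        exact H w hmem.1 ((hgiff w).2 h2)
      · intro H w h1 h2
        have hmem : w ∈ I v ∩ M :=
          hPM ▸ (⟨h1, (hgiff w).1 h2⟩ : w ∈ predSet G' π' v ∩ M)
        exact H w hmem.1 hmem.2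
    unfold violated
    rw [hgiff v, hex, hall]
  refine ⟨hgiff, ?_, hπ'uv⟩
  have hMeq : {y | greedyMIS G π' y} = M := Set.ext fun w => hgiff w
  ext z
  simp only [influencedSet, Set.mem_setOf_eq, hMeq, hvio']
  have hTeq : (⋃ i, Sseq M (predSet G' π') v i) = ⋃ i, Sseq M I v i := hTswap
  rw [hTeq]

end Main

lemma influenced_ext (G G' : SimpleGraph V) (π σ : V → ℕ)
    (hrel : ∀ a b, π a < π b ↔ σ a < σ b) (v : V) :
    influencedSet G G' σ v = influencedSet G G' π v := by
  have hg : ∀ w, greedyMIS G π w ↔ greedyMIS G σ w := greedy_ext G π σ hrel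
  have hg' : ∀ w, greedyMIS G σ w ↔ greedyMIS G π w := fun w => (hg w).symm
  have hM : {y | greedyMIS G σ y} = {y | greedyMIS G π y} := Set.ext fun w => hg' w
  have hP : predSet G' σ = predSet G' π := by
    funext w
    ext z
    simp only [predSet, Set.mem_setOf_eq, hrel z w]
  have hvio : violated G G' σ v ↔ violated G G' π v := by
    unfold violated
    rw [hP]
    simp only [hg']
  ext x
  simp only [influencedSet, Set.mem_setOf_eq, hvio, hM, hP]

def invCount (π σ : V → ℕ) : ℕ :=
  (Finset.univ.filter fun p : V × V => π p.1 < π p.2 ∧ σ p.2 < σ p.1).card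

section Chain

variable (G G' : SimpleGraph V) (u v : V)
  (hupd : G' = G ⊔ SimpleGraph.fromEdgeSet {s(u, v)} ∨
    G' = G \ SimpleGraph.fromEdgeSet {s(u, v)})
  (σ : V → ℕ) (hσ : Function.Injective σ) (hσuv : σ u < σ v)
  (S : Set V) (hSne : S.Nonempty)

include hupd hσ hσuv hSne

lemma chain : ∀ N (π : V → ℕ), Function.Injective π → π u < π v →
    influencedSet G G' π v = S →
    (∀ a ∈ S, ∀ b ∈ S, (π a < π b ↔ σ a < σ b)) →
    (∀ a ∉ S, ∀ b ∉ S, (π a < π b ↔ σ a < σ b)) →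
    invCount π σ = N →
    ({x | greedyMIS G π x} = {x | greedyMIS G σ x} ∧ influencedSet G G' σ v = S) := by
  intro N
  induction N using Nat.strong_induction_on with
  | _ N ihN =>
    intro π hπ hπuv hS hrelS hrelC hN
    by_cases hinv :
        (Finset.univ.filter fun p : V × V => π p.1 < π p.2 ∧ σ p.2 < σ p.1).Nonempty
    · -- there is an inversion; find a π-consecutive one and swap it
      obtain ⟨p, hp, hmin⟩ :=
        Finset.exists_min_image _ (fun p : V × V => π p.2 - π p.1) hinv
      rw [Finset.mem_filter] at hp
      obtain ⟨-, hab, hba⟩ := hp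
      set a := p.1 with hadef
      set b := p.2 with hbdef
      -- consecutiveness
      have hcons : ∀ c, π c ≤ π a ∨ π b ≤ π c := by
        intro c
        by_contra hc
        push_neg at hc
        obtain ⟨hc1, hc2⟩ := hc
        have hca : c ≠ a := fun h => by rw [h] at hc1; omega
        have hcb : c ≠ b := fun h => by rw [h] at hc2; omega
        rcases lt_trichotomy (σ c) (σ a) with h' | h' | h'
        · have hmem : (a, c) ∈
              (Finset.univ.filter fun p : V × V => π p.1 < π p.2 ∧ σ p.2 < σ p.1) :=
            Finset.mem_filter.2 ⟨Finset.mem_univ _,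
              (show π (a, c).1 < π (a, c).2 ∧ σ (a, c).2 < σ (a, c).1 from ⟨hc1, h'⟩)⟩
          have := hmin (a, c) hmem
          simp only at this
          omega
        · exact hca (hσ h'.symm ▸ rfl)
        · have hmem : (c, b) ∈
              (Finset.univ.filter fun p : V × V => π p.1 < π p.2 ∧ σ p.2 < σ p.1) :=
            Finset.mem_filter.2 ⟨Finset.mem_univ _,
              (show π (c, b).1 < π (c, b).2 ∧ σ (c, b).2 < σ (c, b).1 from ⟨hc2, show σ b < σ c by omega⟩)⟩
          have := hmin (c, b) hmem
          simp only at this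
          omega
      have habuv : ¬(a = u ∧ b = v) := by
        rintro ⟨rfl, rfl⟩; exact absurd hσuv (by omega)
      -- the violated predicate holds and S is the iterated union
      have hvioπ : violated G G' π v := by
        obtain ⟨x, hx⟩ := hSne
        rw [← hS] at hx
        exact hx.1
      have hTS : S = Tset {y | greedyMIS G π y} (predSet G' π) v := by
        ext z
        rw [← hS]
        simp only [influencedSet, Set.mem_setOf_eq, hvioπ, true_and]
        exact Iff.rfl
      -- exactly one of a, b lies in S
      have hxorS : (a ∈ S ∧ b ∉ S) ∨ (a ∉ S ∧ b ∈ S) := by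
        by_cases ha : a ∈ S <;> by_cases hb : b ∈ S
        · exact absurd ((hrelS a ha b hb).1 hab) (by omega)
        · exact Or.inl ⟨ha, hb⟩
        · exact Or.inr ⟨ha, hb⟩
        · exact absurd ((hrelC a ha b hb).1 hab) (by omega)
      have hxor : (a ∈ Tset {y | greedyMIS G π y} (predSet G' π) v ∧
          b ∉ Tset {y | greedyMIS G π y} (predSet G' π) v) ∨
        (a ∉ Tset {y | greedyMIS G π y} (predSet G' π) v ∧
          b ∈ Tset {y | greedyMIS G π y} (predSet G' π) v) := by
        rw [← hTS]; exact hxorS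
      obtain ⟨hgiff, hinfl, hπ'uv⟩ :=
        main_step G G' u v hupd π hπ hπuv hvioπ a b hab hcons habuv hxor
      have hπ'inj : Function.Injective (swapFn π a b) := swapFn_inj π hπ a b hab hcons
      -- relative orders with σ are preserved
      have horder : ∀ c d : V, ¬(c = a ∧ d = b) → ¬(c = b ∧ d = a) →
          (swapFn π a b c < swapFn π a b d ↔ π c < π d) :=
        fun c d h1 h2 => swap_lt_iff π hπ a b hab hcons c d h1 h2
      have hrelS' : ∀ c ∈ S, ∀ d ∈ S, (swapFn π a b c < swapFn π a b d ↔ σ c < σ d) := by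
        intro c hc d hd
        have h1 : ¬(c = a ∧ d = b) := by
          rintro ⟨rfl, rfl⟩
          rcases hxorS with ⟨_, h⟩ | ⟨h, _⟩ <;> [exact h hd; exact h hc]
        have h2 : ¬(c = b ∧ d = a) := by
          rintro ⟨rfl, rfl⟩
          rcases hxorS with ⟨_, h⟩ | ⟨h, _⟩ <;> [exact h hc; exact h hd]
        exact (horder c d h1 h2).trans (hrelS c hc d hd)
      have hrelC' : ∀ c ∉ S, ∀ d ∉ S, (swapFn π a b c < swapFn π a b d ↔ σ c < σ d) := by
        intro c hc d hd
        have h1 : ¬(c = a ∧ d = b) := by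
          rintro ⟨rfl, rfl⟩
          rcases hxorS with ⟨h, _⟩ | ⟨_, h⟩ <;> [exact hc h; exact hd h]
        have h2 : ¬(c = b ∧ d = a) := by
          rintro ⟨rfl, rfl⟩
          rcases hxorS with ⟨h, _⟩ | ⟨_, h⟩ <;> [exact hd h; exact hc h]
        exact (horder c d h1 h2).trans (hrelC c hc d hd)
      -- the inversion count strictly decreases
      have hcard : invCount (swapFn π a b) σ < N := by
        rw [← hN]
        unfold invCount
        have hpmem : p ∈
            (Finset.univ.filter fun q : V × V => π q.1 < π q.2 ∧ σ q.2 < σ q.1) :=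
          Finset.mem_filter.2 ⟨Finset.mem_univ _, hab, hba⟩
        have hsub : (Finset.univ.filter
              fun q : V × V => swapFn π a b q.1 < swapFn π a b q.2 ∧ σ q.2 < σ q.1) ⊆
            (Finset.univ.filter
              fun q : V × V => π q.1 < π q.2 ∧ σ q.2 < σ q.1).erase p := by
        -- each new inversion is an old one, and (a,b) is no longer one
          intro q hq
          rw [Finset.mem_filter] at hq
          obtain ⟨-, hq1, hq2⟩ := hq
          have h1 : ¬(q.1 = a ∧ q.2 = b) := by
            rintro ⟨h3, h4⟩
            rw [h3, h4, swapFn_a, swapFn_b π a b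
              (fun h => absurd hab (by rw [h]; exact lt_irrefl _))] at hq1
            omega
          have h2 : ¬(q.1 = b ∧ q.2 = a) := by
            rintro ⟨h3, h4⟩
            rw [h3, h4] at hq2
            omega
          refine Finset.mem_erase.2 ⟨?_, Finset.mem_filter.2
            ⟨Finset.mem_univ _, (horder q.1 q.2 h1 h2).1 hq1, hq2⟩⟩
          intro h
          exact h1 ⟨by rw [h], by rw [h]⟩
        calc (Finset.univ.filter
              fun q : V × V => swapFn π a b q.1 < swapFn π a b q.2 ∧ σ q.2 < σ q.1).card
            ≤ ((Finset.univ.filter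
              fun q : V × V => π q.1 < π q.2 ∧ σ q.2 < σ q.1).erase p).card :=
              Finset.card_le_card hsub
          _ < (Finset.univ.filter
              fun q : V × V => π q.1 < π q.2 ∧ σ q.2 < σ q.1).card :=
              Finset.card_erase_lt_of_mem hpmem
      -- apply the induction hypothesis to the swapped order
      have hS' : influencedSet G G' (swapFn π a b) v = S := hinfl.trans hS
      obtain ⟨hc1, hc2⟩ := ihN (invCount (swapFn π a b) σ) hcard (swapFn π a b)
        hπ'inj hπ'uv hS' hrelS' hrelC' rfl
      refine ⟨?_, hc2⟩
      rw [← hc1]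
      exact Set.ext fun w => (hgiff w).symm
    · -- no inversions: π and σ induce the same order everywhere
      have hni : ∀ c d : V, ¬(π c < π d ∧ σ d < σ c) := by
        intro c d h
        exact hinv ⟨(c, d), Finset.mem_filter.2 ⟨Finset.mem_univ _, h⟩⟩
      have hrel : ∀ c d, π c < π d ↔ σ c < σ d := by
        intro c d
        constructor
        · intro h
          rcases lt_trichotomy (σ c) (σ d) with h' | h' | h'
          · exact h'
          · exact absurd h (by rw [hσ h']; exact lt_irrefl _)
          · exact absurd ⟨h, h'⟩ (hni c d)
        · intro h
          rcases lt_trichotomy (π c) (π d) with h' | h' | h'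
          · exact h'
          · exact absurd h (by rw [hπ h']; exact lt_irrefl _)
          · exact absurd ⟨h', h⟩ (hni d c)
      refine ⟨Set.ext fun w => greedy_ext G π σ hrel w, ?_⟩
      rw [influenced_ext G G' π σ hrel v]
      exact hS

end Chain

/-- Lemma (rand-perm): for an edge update between `u` and `v` (insertion or
deletion of the edge `uv`, turning `G` into `G'`), if `π, σ` are injective
orders with `π(u) < π(v)`, `σ(u) < σ(v)`, `S = S_v^π ≠ ∅` is the influenced
set, and `π` and `σ` induce the same relative order on `S` and on `V \ S`,
then the greedy MIS of the old graph w.r.t. `π` equals the one w.r.t. `σ`,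
and `S_v^σ = S`. -/
theorem stmt17 (G G' : SimpleGraph V) (u v : V) (huv : u ≠ v)
    (hupd : G' = G ⊔ SimpleGraph.fromEdgeSet {s(u, v)} ∨
      G' = G \ SimpleGraph.fromEdgeSet {s(u, v)})
    (π σ : V → ℕ) (hπ : Function.Injective π) (hσ : Function.Injective σ)
    (hπuv : π u < π v) (hσuv : σ u < σ v)
    (S : Set V) (hS : S = influencedSet G G' π v) (hSne : S.Nonempty)
    (hrelS : ∀ a ∈ S, ∀ b ∈ S, (π a < π b ↔ σ a < σ b))
    (hrelC : ∀ a ∉ S, ∀ b ∉ S, (π a < π b ↔ σ a < σ b)) :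
    {x | greedyMIS G π x} = {x | greedyMIS G σ x} ∧
      influencedSet G G' σ v = S := by
  obtain ⟨h1, h2⟩ := chain G G' u v hupd σ hσ hσuv S hSne (invCount π σ) π hπ hπuv
    hS.symm hrelS hrelC rfl
  exact ⟨h1, h2⟩
end
end

section
/- With the setup of the influenced set: if S_v^π = S ≠ ∅, σ agrees with π in relative order on S∖{v} and on V∖S, σ(u) < σ(v), and v is NOT the σ-minimum of S, then S_v^σ = ∅. -/
variable {V : Type*} [Fintype V] [DecidableEq V]

/-- Lemma (empty): for an edge update between `u` and `v`, if `S = S_v^π ≠ ∅`,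
`σ` agrees with `π` in relative order on `S \ {v}` and on `V \ S`,
`σ(u) < σ(v)`, and `v` is not the `σ`-minimum of `S`, then `S_v^σ = ∅`. -/
theorem stmt18 (G G' : SimpleGraph V) (u v : V) (huv : u ≠ v)
    (hupd : G' = G ⊔ SimpleGraph.fromEdgeSet {s(u, v)} ∨
      G' = G \ SimpleGraph.fromEdgeSet {s(u, v)})
    (π σ : V → ℕ) (hπ : Function.Injective π) (hσ : Function.Injective σ)
    (hπuv : π u < π v) (hσuv : σ u < σ v)
    (S : Set V) (hS : S = influencedSet G G' π v) (hSne : S.Nonempty)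
    (hrelS : ∀ a ∈ S \ {v}, ∀ b ∈ S \ {v}, (π a < π b ↔ σ a < σ b))
    (hrelC : ∀ a ∉ S, ∀ b ∉ S, (π a < π b ↔ σ a < σ b))
    (hnotmin : ∃ w ∈ S, w ≠ v ∧ σ w < σ v) :
    influencedSet G G' σ v = ∅ := by
  classical
  have gdef : ∀ (τ : V → ℕ) (x : V), greedyMIS G τ x ↔
      ∀ y, G.Adj y x → τ y < τ x → ¬ greedyMIS G τ y := by
    intro τ x; rw [greedyMIS]
  -- abbreviations
  have hviol : violated G G' π v := by
    obtain ⟨x0, hx0⟩ := hSne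
    rw [hS] at hx0; exact hx0.1
  have hSU : S = ⋃ i, Sseq {y | greedyMIS G π y} (predSet G' π) v i := by
    rw [hS]; ext x; simp [influencedSet, hviol]
  have hvS : v ∈ S := by
    rw [hSU]
    refine Set.mem_iUnion.2 ⟨0, ?_⟩
    simp only [Sseq]
    rfl
  -- adjacency transfer between G and G'
  have htrans : ∀ x y : V, ¬(x = u ∧ y = v) → ¬(x = v ∧ y = u) →
      (G.Adj x y ↔ G'.Adj x y) := by
    intro x y h1 h2
    have hne : s(x, y) ≠ s(u, v) := by
      intro he
      rcases Sym2.eq_iff.mp he with ⟨rfl, rfl⟩ | ⟨rfl, rfl⟩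
      · exact h1 ⟨rfl, rfl⟩
      · exact h2 ⟨rfl, rfl⟩
    rcases hupd with rfl | rfl
    · constructor
      · intro h; exact Or.inl h
      · rintro (h | h)
        · exact h
        · exact absurd (h.1 : _) (by simpa using hne)
    · constructor
      · intro h
        refine ⟨h, ?_⟩
        simp only [SimpleGraph.fromEdgeSet_adj, Set.mem_singleton_iff]
        rintro ⟨he, -⟩; exact hne he
      · exact fun h => h.1
  -- closure 1
  have hcl1 : ∀ z, greedyMIS G π z → z ∉ S → ∀ x, x ∈ predSet G' π z → x ∉ S := by
    intro z hzM hzS x hxI hxS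
    rw [hSU] at hxS
    obtain ⟨i, hi⟩ := Set.mem_iUnion.1 hxS
    apply hzS
    rw [hSU]
    refine Set.mem_iUnion.2 ⟨i + 1, ?_⟩
    simp only [Sseq]
    exact Or.inl ⟨hzM, ⟨x, hi, hxI⟩⟩
  -- closure 2
  have hcl2 : ∀ z, ¬ greedyMIS G π z → z ∉ S →
      ¬(predSet G' π z ∩ {y | greedyMIS G π y} ⊆ S) := by
    intro z hzM hzS hsub
    have hch : ∀ x : V, ∃ i, x ∈ predSet G' π z ∩ {y | greedyMIS G π y} →
        x ∈ Sseq {y | greedyMIS G π y} (predSet G' π) v i := by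
      intro x
      by_cases hx : x ∈ predSet G' π z ∩ {y | greedyMIS G π y}
      · have hxS := hsub hx
        rw [hSU] at hxS
        obtain ⟨i, hi⟩ := Set.mem_iUnion.1 hxS
        exact ⟨i, fun _ => hi⟩
      · exact ⟨0, fun h => absurd h hx⟩
    choose f hf using hch
    apply hzS
    rw [hSU]
    refine Set.mem_iUnion.2 ⟨Finset.univ.sup f + 1, ?_⟩
    simp only [Sseq]
    refine Or.inr ⟨hzM, ?_⟩
    intro x hx
    exact Set.mem_iUnion₂.2 ⟨f x, Finset.le_sup (Finset.mem_univ x), hf x hx⟩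
  -- the sigma-minimal element of S \ {v}
  obtain ⟨w0, hw0S, hw0v, hw0σ⟩ := hnotmin
  obtain ⟨w, hwmem, hwmin⟩ :=
    Set.exists_min_image (S \ {v}) σ (Set.toFinite _) ⟨w0, hw0S, hw0v⟩
  have hwS : w ∈ S := hwmem.1
  have hwv : w ≠ v := hwmem.2
  have hwσv : σ w < σ v := lt_of_le_of_lt (hwmin w0 ⟨hw0S, hw0v⟩) hw0σ
  have hmin' : ∀ y, σ y < σ w → y ∉ S := by
    intro y hy hyS
    have hyv : y ≠ v := by
      intro h; subst h
      exact absurd (hy.trans hwσv) (lt_irrefl _)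
    exact absurd (hwmin y ⟨hyS, hyv⟩) (not_le_of_gt hy)
  -- structure of w
  have hkeyW : π v < π w ∧ G.Adj v w ∧ G'.Adj v w ∧
      (greedyMIS G π w ∨ predSet G' π w ∩ {y | greedyMIS G π y} ⊆ S) := by
    have hwU : ∃ i, w ∈ Sseq {y | greedyMIS G π y} (predSet G' π) v (i + 1) := by
      have := hwS
      rw [hSU] at this
      obtain ⟨i, hi⟩ := Set.mem_iUnion.1 this
      cases i with
      | zero =>
        simp only [Sseq, Set.mem_singleton_iff] at hi
        exact absurd hi hwv
      | succ j => exact ⟨j, hi⟩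
    obtain ⟨i, hwi⟩ := hwU
    simp only [Sseq] at hwi
    have hwu : G'.Adj v w → π v < π w → w ≠ u := by
      intro _ hvw h; subst h
      exact absurd (hπuv.trans hvw) (lt_irrefl _)
    rcases hwi with h | h
    · -- w in M with a predecessor in S_i
      obtain ⟨hwM, x, hxS, hxI⟩ := h
      have hxInS : x ∈ S := by
        rw [hSU]; exact Set.mem_iUnion.2 ⟨i, hxS⟩
      have hxv : x = v := by
        by_contra hne
        have hσxw : σ x < σ w := (hrelS x ⟨hxInS, hne⟩ w ⟨hwS, hwv⟩).1 hxI.2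
        exact hmin' x hσxw hxInS
      rw [hxv] at hxI
      have hvw' : G'.Adj v w := hxI.1
      have hπvw : π v < π w := hxI.2
      have hwnu : w ≠ u := hwu hvw' hπvw
      have hvw : G.Adj v w :=
        (htrans v w (fun h => hwv h.2) (fun h => hwnu h.2)).2 hvw'
      exact ⟨hπvw, hvw, hvw', Or.inl hwM⟩
    · -- w not in M, with pred-MIS-neighbors captured
      obtain ⟨hwM, hsub⟩ := h
      have hsub' : predSet G' π w ∩ {y | greedyMIS G π y} ⊆ S := by
        intro x hx
        obtain ⟨j, -, hj⟩ := Set.mem_iUnion₂.1 (hsub hx)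
        rw [hSU]; exact Set.mem_iUnion.2 ⟨j, hj⟩
      have hex : ∃ x, G.Adj x w ∧ π x < π w ∧ greedyMIS G π x := by
        simp only [Set.mem_setOf_eq] at hwM
        rw [gdef π w] at hwM
        push_neg at hwM
        obtain ⟨x, h1, h2, h3⟩ := hwM
        exact ⟨x, h1, h2, h3⟩
      obtain ⟨x, hxadj, hxπ, hxM⟩ := hex
      have hxv : x = v := by
        by_contra hne
        have hxw' : G'.Adj x w :=
          (htrans x w (fun h => hwv h.2) (fun h => hne h.1)).1 hxadj
        have hxInS : x ∈ S := hsub' ⟨⟨hxw', hxπ⟩, hxM⟩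
        have hσxw : σ x < σ w := (hrelS x ⟨hxInS, hne⟩ w ⟨hwS, hwv⟩).1 hxπ
        exact hmin' x hσxw hxInS
      rw [hxv] at hxadj hxπ
      have hwnu : w ≠ u := by
        intro h; subst h
        exact absurd (hπuv.trans hxπ) (lt_irrefl _)
      have hvw' : G'.Adj v w :=
        (htrans v w (fun h => hwv h.2) (fun h => hwnu h.2)).1 hxadj
      exact ⟨hxπ, hxadj, hvw', Or.inr hsub'⟩
  -- key induction: below w, the two greedy MIS's agree outside S
  have key : ∀ n z, σ z = n → σ z < σ w → z ∉ S →
      (greedyMIS G σ z ↔ greedyMIS G π z) := by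
    intro n
    induction n using Nat.strong_induction_on with
    | _ n ih =>
      intro z hzn hzw hzS
      constructor
      · intro hσz
        by_contra hπz
        have h2 := hcl2 z hπz hzS
        rw [Set.not_subset] at h2
        obtain ⟨x, hx, hxS⟩ := h2
        obtain ⟨hxI, hxM⟩ := hx
        have hxv : x ≠ v := fun h => hxS (h ▸ hvS)
        have hzv : z ≠ v := by
          intro h; subst h
          exact absurd (hzw.trans hwσv) (lt_irrefl _)
        have hadj : G.Adj x z :=
          (htrans x z (fun h => hzv h.2) (fun h => hxv h.1)).2 hxI.1
        have hσxz : σ x < σ z := (hrelC x hxS z hzS).1 hxI.2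
        have hMσx : greedyMIS G σ x :=
          (ih (σ x) (hzn ▸ hσxz) x rfl (hσxz.trans hzw) hxS).2 hxM
        exact (gdef σ z).1 hσz x hadj hσxz hMσx
      · intro hπz
        rw [gdef σ z]
        intro y hyz hσyz hMσy
        have hyS : y ∉ S := hmin' y (hσyz.trans hzw)
        have hMπy : greedyMIS G π y :=
          (ih (σ y) (hzn ▸ hσyz) y rfl (hσyz.trans hzw) hyS).1 hMσy
        have hπyz : π y < π z := (hrelC y hyS z hzS).2 hσyz
        exact (gdef π z).1 hπz y hyz hπyz hMπy
  -- w is in the greedy MIS wrt sigma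
  have hMσw : greedyMIS G σ w := by
    rw [gdef σ w]
    intro y hyw hσyw hMσy
    have hyS : y ∉ S := hmin' y hσyw
    have hyv : y ≠ v := fun h => hyS (h ▸ hvS)
    have hMπy : greedyMIS G π y := (key (σ y) y rfl hσyw hyS).1 hMσy
    have hyw' : G'.Adj y w :=
      (htrans y w (fun h => hwv h.2) (fun h => hyv h.1)).1 hyw
    have hπyw : π y < π w := by
      rcases Nat.lt_or_ge (π y) (π w) with h | h
      · exact h
      have hne : π w ≠ π y := fun h' => hyw.ne (hπ h').symm
      have hlt : π w < π y := lt_of_le_of_ne h hne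
      exact absurd hwS (hcl1 y hMπy hyS w ⟨hyw'.symm, hlt⟩)
    rcases hkeyW.2.2.2 with hwM | hsub
    · exact (gdef π w).1 hwM y hyw hπyw hMπy
    · exact hyS (hsub ⟨⟨hyw', hπyw⟩, hMπy⟩)
  -- conclude
  have hnotviol : ¬ violated G G' σ v := by
    rintro (⟨hv, -⟩ | ⟨-, hall⟩)
    · exact (gdef σ v).1 hv w hkeyW.2.1.symm hwσv hMσw
    · exact hall w ⟨hkeyW.2.2.1.symm, hwσv⟩ hMσw
  ext x
  simp only [influencedSet, Set.mem_setOf_eq, Set.mem_empty_iff_false, iff_false]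
  exact fun h => hnotviol h.1
end
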